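/- arXiv:2103.03107 — 2 statements merged into one kernel-verified Lean document; each statement's English description precedes it below -/
import Mathlib

section
/- Let H = {a,b,c,d,e} with the hyperoperation ∘ of Table 1. Then (d ∘ d) * {b} ≠ (b ∘ d) * {d}; consequently there exist x, y, z ∈ H with (x ∘ y) * {z} ≠ (z ∘ y) * {x}, so H with ∘ is not an LA-hypergroupoid (Example 4 of the commented paper is wrong). -/
/-- The five-element set `H = {a,b,c,d,e}` of Table 1. -/
inductive H1 : Type
  | a | b | c | d | e
  deriving DecidableEq

open H1

/-- The hyperoperation of Table 1. -/
def circ1 : H1 → H1 → Set H1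
  | a, _ => {a}
  | b, a => {a}
  | b, b => {a, e}
  | b, c => {a, e}
  | b, d => {a, c}
  | b, e => {a, e}
  | c, a => {a}
  | c, b => {a, e}
  | c, c => {a, e}
  | c, d => {a, b}
  | c, e => {a, e}
  | d, a => {a}
  | d, b => {b}
  | d, c => {c}
  | d, d => {d}
  | d, e => {e}
  | e, a => {a}
  | e, b => {a, e}
  | e, c => {a, e}
  | e, d => {a, e}
  | e, e => {a, e}

/-- The operation on nonempty subsets induced by the hyperoperation. -/
def inducedStar {H : Type*} (circ : H → H → Set H) (A B : Set H) : Set H :=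
  ⋃ x ∈ A, ⋃ y ∈ B, circ x y

/-- An LA-hypergroupoid: `(x ∘ y) * {z} = (z ∘ y) * {x}` for all `x y z`. -/
def IsLAHypergroupoid {H : Type*} (circ : H → H → Set H) : Prop :=
  ∀ x y z : H, inducedStar circ (circ x y) {z} = inducedStar circ (circ z y) {x}

theorem inducedStar_singleton_right {H : Type*} (circ : H → H → Set H) (A : Set H) (z : H) :
    inducedStar circ A {z} = ⋃ x ∈ A, circ x z := by
  simp only [inducedStar, Set.mem_singleton_iff, Set.iUnion_iUnion_eq_left]

theorem inducedStar_circ1_d_d_b : inducedStar circ1 (circ1 d d) {b} = {b} := by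
  simp [inducedStar_singleton_right, circ1]

theorem inducedStar_circ1_b_d_d : inducedStar circ1 (circ1 b d) {d} = {a, b} := by
  simp [inducedStar_singleton_right, circ1, Set.pair_comm b a]

/-- In Table 1, `(d ∘ d) * {b} ≠ (b ∘ d) * {d}`; hence there exist `x y z` with
`(x ∘ y) * {z} ≠ (z ∘ y) * {x}`, so `H` with `∘` is not an LA-hypergroupoid. -/
theorem table1_not_LA :
    inducedStar circ1 (circ1 d d) {b} ≠ inducedStar circ1 (circ1 b d) {d} ∧
    (∃ x y z : H1,
      inducedStar circ1 (circ1 x y) {z} ≠ inducedStar circ1 (circ1 z y) {x}) ∧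
    ¬ IsLAHypergroupoid circ1 := by
  have hne : inducedStar circ1 (circ1 d d) {b} ≠ inducedStar circ1 (circ1 b d) {d} := by
    rw [inducedStar_circ1_d_d_b, inducedStar_circ1_b_d_d]
    intro h
    have ha : a ∈ ({b} : Set H1) := h ▸ Set.mem_insert a {b}
    simp at ha
  exact ⟨hne, ⟨d, d, b, hne⟩, fun hLA => hne (hLA d d b)⟩
end

section
/- Let H = {a,b,c,d} with the hyperoperation ∘ of Table 2. Then (c ∘ d) * {b} ≠ (b ∘ d) * {c}; consequently there exist x, y, z ∈ H with (x ∘ y) * {z} ≠ (z ∘ y) * {x}, so H with ∘ is not an LA-hypergroupoid (Example 5 of the commented paper is wrong). -/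
/-- The four-element set `H = {a,b,c,d}` of Table 2. -/
inductive H2 : Type
  | a | b | c | d
  deriving DecidableEq

open H2

/-- The hyperoperation of Table 2. -/
def circ2 : H2 → H2 → Set H2
  | a, _ => {a}
  | b, a => {a}
  | b, b => {a, b, c, d}
  | b, c => {a, b, c}
  | b, d => {a, b, c}
  | c, a => {a}
  | c, b => {a, b, c}
  | c, c => {a, b, c}
  | c, d => {a, b, c}
  | d, a => {a}
  | d, b => {a, b, c}
  | d, c => {a, b, c}
  | d, d => {a, b, c}

/-! The element `d` occurs in Table 2 only in `b ∘ b`. As `b ∈ c ∘ d`, this puts `d` into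
`(c ∘ d) * {b}`, whereas `(b ∘ d) * {c}` is a union of products `x ∘ c`, none of which
contains `d`. -/

theorem mem_inducedStar_singleton {H : Type*} (circ : H → H → Set H) (A : Set H) (y z : H) :
    z ∈ inducedStar circ A {y} ↔ ∃ x ∈ A, z ∈ circ x y := by
  simp [inducedStar]

theorem d_not_mem_circ2_c (x : H2) : d ∉ circ2 x c := by
  cases x <;> simp [circ2]

theorem d_mem_inducedStar_circ2_c_d_b : d ∈ inducedStar circ2 (circ2 c d) {b} :=
  (mem_inducedStar_singleton _ _ _ _).2 ⟨b, by simp [circ2], by simp [circ2]⟩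

theorem d_not_mem_inducedStar_circ2_b_d_c : d ∉ inducedStar circ2 (circ2 b d) {c} := by
  rw [mem_inducedStar_singleton]
  rintro ⟨x, -, hx⟩
  exact d_not_mem_circ2_c x hx

theorem inducedStar_circ2_c_d_b_ne :
    inducedStar circ2 (circ2 c d) {b} ≠ inducedStar circ2 (circ2 b d) {c} := fun h =>
  d_not_mem_inducedStar_circ2_b_d_c (h ▸ d_mem_inducedStar_circ2_c_d_b)

/-- In Table 2, `(c ∘ d) * {b} ≠ (b ∘ d) * {c}`; hence there exist `x y z` with
`(x ∘ y) * {z} ≠ (z ∘ y) * {x}`, so `H` with `∘` is not an LA-hypergroupoid. -/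
theorem table2_not_LA :
    inducedStar circ2 (circ2 c d) {b} ≠ inducedStar circ2 (circ2 b d) {c} ∧
    (∃ x y z : H2,
      inducedStar circ2 (circ2 x y) {z} ≠ inducedStar circ2 (circ2 z y) {x}) ∧
    ¬ IsLAHypergroupoid circ2 :=
  ⟨inducedStar_circ2_c_d_b_ne, ⟨c, d, b, inducedStar_circ2_c_d_b_ne⟩,
    fun hLA => inducedStar_circ2_c_d_b_ne (hLA c d b)⟩
end
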